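/- arXiv:1506.03779 — 4 statements merged into one kernel-verified Lean document; each statement's English description precedes it below -/
import Mathlib

section
/- Let G be a graph and let k be an integer with 0 ≤ k ≤ δ(G). A set S ⊆ V(G) is a global powerful k-alliance in G (i.e., δ_S(v) ≥ δ_{V∖S}(v) + k for all v ∈ S and δ_S(v) ≥ δ_{V∖S}(v) + k + 2 for all v ∉ S) if and only if the function f with f(v)=1 for v∈S and f(v)=-1 otherwise is a signed (k+1)-dominating function for G, i.e., Σ_{u∈N[v]} f(u) ≥ k+1 for all v ∈ V. -/
open Finset

/-- Number of neighbors of `v` inside `S`. -/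
def degIn {V : Type*} [Fintype V] [DecidableEq V] (G : SimpleGraph V) [DecidableRel G.Adj]
    (S : Finset V) (v : V) : ℕ := (G.neighborFinset v ∩ S).card

/-- `M` is an open `k`-monopoly: `δ_M(v) ≥ δ(v)/2 + k` for every vertex `v`. -/
def IsKMonopoly {V : Type*} [Fintype V] [DecidableEq V] (G : SimpleGraph V) [DecidableRel G.Adj]
    (k : ℤ) (M : Finset V) : Prop :=
  M.Nonempty ∧ ∀ v : V, ((degIn G M v : ℚ)) ≥ (G.degree v : ℚ) / 2 + (k : ℚ)

/-- The open `k`-monopoly number: minimum cardinality of an open `k`-monopoly. -/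
noncomputable def monopolyNumber {V : Type*} [Fintype V] [DecidableEq V] (G : SimpleGraph V)
    [DecidableRel G.Adj] (k : ℤ) : ℕ :=
  sInf {n : ℕ | ∃ M : Finset V, IsKMonopoly G k M ∧ M.card = n}

/- A vertex `v` sees `δ_S(v) - δ_{V∖S}(v)` in its open neighbourhood and `±1` at itself, so the
closed-neighbourhood sum of the `±1`-function is `δ_S(v) - δ_{V∖S}(v) + 1` for `v ∈ S` and
`δ_S(v) - δ_{V∖S}(v) - 1` for `v ∉ S`; the bound `k + 1` on it is exactly the defensive `k`-condition
in the first case and the offensive `(k + 2)`-condition in the second. -/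

theorem Finset.sum_ite_mem_one_neg_one {α : Type*} [Fintype α] [DecidableEq α] (s S : Finset α) :
    ∑ u ∈ s, (if u ∈ S then (1 : ℤ) else -1) = ((s ∩ S).card : ℤ) - ((s ∩ Sᶜ).card : ℤ) := by
  rw [sum_ite, sum_const, sum_const, ← filter_mem_eq_inter, ← filter_mem_eq_inter]
  simp only [mem_compl, nsmul_eq_mul, mul_one, mul_neg, sub_eq_add_neg]

theorem ite_sign_add_ge_iff (p : Prop) [Decidable p] (a b k : ℤ) :
    ((p → a ≥ b + k) ∧ (¬p → a ≥ b + k + 2)) ↔ (if p then (1 : ℤ) else -1) + (a - b) ≥ k + 1 := by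
  split_ifs with hp <;> simp only [hp, true_implies, false_implies, not_true_eq_false,
    not_false_eq_true, and_true, true_and] <;> omega

theorem stmt2_general {V : Type*} [Fintype V] [DecidableEq V] (G : SimpleGraph V) [DecidableRel G.Adj]
    (k : ℤ) (S : Finset V) :
    ((∀ v ∈ S, (degIn G S v : ℤ) ≥ (degIn G Sᶜ v : ℤ) + k) ∧
      (∀ v ∉ S, (degIn G S v : ℤ) ≥ (degIn G Sᶜ v : ℤ) + k + 2)) ↔
      (∀ v : V, ((if v ∈ S then (1 : ℤ) else -1) +
        ∑ u ∈ G.neighborFinset v, (if u ∈ S then (1 : ℤ) else -1)) ≥ k + 1) := by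
  rw [← forall_and]
  refine forall_congr' fun v => ?_
  rw [sum_ite_mem_one_neg_one]
  exact ite_sign_add_ge_iff _ _ _ _

theorem stmt2 {V : Type*} [Fintype V] [DecidableEq V] (G : SimpleGraph V) [DecidableRel G.Adj]
    (k : ℤ) (hk0 : 0 ≤ k) (hk1 : k ≤ (G.minDegree : ℤ)) (S : Finset V) :
    ((∀ v ∈ S, (degIn G S v : ℤ) ≥ (degIn G Sᶜ v : ℤ) + k) ∧
      (∀ v ∉ S, (degIn G S v : ℤ) ≥ (degIn G Sᶜ v : ℤ) + k + 2)) ↔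
      (∀ v : V, ((if v ∈ S then (1 : ℤ) else -1) +
        ∑ u ∈ G.neighborFinset v, (if u ∈ S then (1 : ℤ) else -1)) ≥ k + 1) :=
  stmt2_general G k S
end

section
/- For any r-regular graph G of order n and every integer k with 1−⌈r/2⌉ ≤ k ≤ ⌊r/2⌋, the open k-monopoly number satisfies M_k(G) ≥ ⌈n(2k+r)/(2r)⌉. -/
open Finset

section Monopoly

variable {V : Type*} [Fintype V] [DecidableEq V] (G : SimpleGraph V) [DecidableRel G.Adj]

theorem sum_degIn_eq_sum_degree (M : Finset V) : ∑ v, degIn G M v = ∑ m ∈ M, G.degree m := by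
  have hAbove (v : V) : M.bipartiteAbove G.Adj v = G.neighborFinset v ∩ M := by
    ext m; simp [and_comm]
  have hBelow (m : V) : univ.bipartiteBelow G.Adj m = G.neighborFinset m := by
    ext v; simp [G.adj_comm]
  simp_rw [degIn, ← hAbove, sum_card_bipartiteAbove_eq_sum_card_bipartiteBelow, hBelow,
    G.card_neighborFinset_eq_degree]

theorem sum_degIn_of_isRegularOfDegree {r : ℕ} (hreg : G.IsRegularOfDegree r) (M : Finset V) :
    ∑ v, degIn G M v = r * #M := by
  rw [sum_degIn_eq_sum_degree, sum_congr rfl fun m _ => hreg m, sum_const, smul_eq_mul, mul_comm]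

theorem isKMonopoly_univ [Nonempty V] {k : ℤ} (hk : ∀ v, 2 * k ≤ G.degree v) :
    IsKMonopoly G k univ := by
  refine ⟨univ_nonempty, fun v => ?_⟩
  have hdeg : degIn G univ v = G.degree v := by
    rw [degIn, inter_univ, G.card_neighborFinset_eq_degree]
  have : (2 * k : ℚ) ≤ G.degree v := by exact_mod_cast hk v
  rw [hdeg]
  linarith

theorem exists_isKMonopoly_card_eq_monopolyNumber {k : ℤ} {M : Finset V}
    (hM : IsKMonopoly G k M) : ∃ M' : Finset V, IsKMonopoly G k M' ∧ #M' = monopolyNumber G k :=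
  Nat.sInf_mem (s := {n | ∃ M : Finset V, IsKMonopoly G k M ∧ #M = n}) ⟨#M, M, hM, rfl⟩

/-- Summing `δ_M(v) ≥ r/2 + k` over all vertices counts every vertex of `M` exactly `r` times. -/
theorem IsKMonopoly.card_mul_le {r : ℕ} (hreg : G.IsRegularOfDegree r) {k : ℤ} {M : Finset V}
    (hM : IsKMonopoly G k M) : (Fintype.card V : ℚ) * (2 * k + r) ≤ #M * (2 * r) := by
  have hsum : (∑ v, (degIn G M v : ℚ)) = r * #M := by
    exact_mod_cast sum_degIn_of_isRegularOfDegree G hreg M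
  have hlow : ∑ _v : V, ((r : ℚ) / 2 + k) ≤ ∑ v, (degIn G M v : ℚ) :=
    sum_le_sum fun v _ => by simpa [hreg v, add_comm] using hM.2 v
  rw [sum_const, card_univ, nsmul_eq_mul, hsum] at hlow
  linarith

end Monopoly

theorem stmt9_general {V : Type*} [Fintype V] [DecidableEq V] (G : SimpleGraph V) [DecidableRel G.Adj]
    (r : ℕ) (hreg : G.IsRegularOfDegree r) (k : ℤ)
    (hk1 : k ≤ ⌊(r : ℚ) / 2⌋) :
    ⌈((Fintype.card V : ℚ) * (2 * k + r) / (2 * r) : ℚ)⌉ ≤ (monopolyNumber G k : ℤ) := by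
  cases isEmpty_or_nonempty V
  · simp
  -- Some k-monopoly must exist, since otherwise `monopolyNumber G k = sInf ∅ = 0`.
  have hk : ∀ v, 2 * k ≤ G.degree v := fun v => by
    have : (k : ℚ) ≤ r / 2 := Int.le_floor.mp hk1
    rw [hreg v]
    exact_mod_cast (by linarith : (2 * k : ℚ) ≤ r)
  obtain ⟨M, hM, hcard⟩ := exists_isKMonopoly_card_eq_monopolyNumber G (isKMonopoly_univ G hk)
  rw [Int.ceil_le, ← hcard, Int.cast_natCast]
  exact div_le_of_le_mul₀ (by positivity) (by positivity) (hM.card_mul_le G hreg)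

theorem stmt9 {V : Type*} [Fintype V] [DecidableEq V] (G : SimpleGraph V) [DecidableRel G.Adj]
    (r : ℕ) (hr : 1 ≤ r) (hreg : G.IsRegularOfDegree r) (k : ℤ)
    (hk0 : 1 - ⌈(r : ℚ) / 2⌉ ≤ k) (hk1 : k ≤ ⌊(r : ℚ) / 2⌋) :
    ⌈((Fintype.card V : ℚ) * (2 * k + r) / (2 * r) : ℚ)⌉ ≤ (monopolyNumber G k : ℤ) :=
  stmt9_general G r hreg k hk1
end

section
/- For the wheel graph W_{1,n−1} = K_1 + C_{n−1} (n ≥ 4), the open 1-monopoly number equals n: M_1(W_{1,n−1}) = n. -/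
open Finset

attribute [local instance] Classical.propDecidable

/-- The wheel graph `W_{1,m} = K_1 + C_m`: the join of a single (hub) vertex `none`
with the cycle `C_m` on the vertices `some i`. -/
def wheelGraph (m : ℕ) : SimpleGraph (Option (Fin m)) :=
  SimpleGraph.fromRel (fun a b =>
    a = none ∨ ∃ i j : Fin m, a = some i ∧ b = some j ∧ (SimpleGraph.cycleGraph m).Adj i j)

/-! A vertex of degree `d ≤ 3` needs `δ_M(v) ≥ d/2 + 1 > d - 1`, so an open 1-monopoly `M` contains all
its neighbours. In the wheel every rim vertex has degree 3 and every vertex is a neighbour of a rim vertex,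
so `M` is the whole vertex set; conversely the whole vertex set is an open 1-monopoly because all degrees
are at least 2. -/

section Monopoly

variable {V : Type*} [Fintype V] [DecidableEq V] (G : SimpleGraph V) [DecidableRel G.Adj]

lemma degIn_univ (v : V) : degIn G univ v = G.degree v := by
  rw [degIn, inter_univ, SimpleGraph.card_neighborFinset_eq_degree]

lemma isKMonopoly_one_univ [Nonempty V] (h : ∀ v, 2 ≤ G.degree v) : IsKMonopoly G 1 univ := by
  refine ⟨univ_nonempty, fun v => ?_⟩
  have hv : (2 : ℚ) ≤ G.degree v := by exact_mod_cast h v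
  rw [degIn_univ]
  push_cast
  linarith

variable {G}

lemma IsKMonopoly.neighborFinset_subset {M : Finset V} (hM : IsKMonopoly G 1 M) {v : V}
    (hv : G.degree v ≤ 3) : G.neighborFinset v ⊆ M := by
  have hbound := hM.2 v
  have hv' : (G.degree v : ℚ) ≤ 3 := by exact_mod_cast hv
  have hlt : (G.degree v : ℚ) < degIn G M v + 1 := by push_cast at hbound; linarith
  have hcard : #(G.neighborFinset v) ≤ #(G.neighborFinset v ∩ M) := by
    rw [G.card_neighborFinset_eq_degree]
    exact Nat.lt_succ_iff.1 (by exact_mod_cast hlt)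
  exact inter_eq_left.1 (eq_of_subset_of_card_le inter_subset_left hcard)

lemma IsKMonopoly.eq_univ {M : Finset V} (hM : IsKMonopoly G 1 M)
    (h : ∀ w, ∃ v, G.Adj v w ∧ G.degree v ≤ 3) : M = univ :=
  eq_univ_of_forall fun w =>
    let ⟨v, hvw, hv⟩ := h w
    hM.neighborFinset_subset hv ((G.mem_neighborFinset v w).2 hvw)

lemma monopolyNumber_eq_card {k : ℤ} (hU : IsKMonopoly G k univ)
    (h : ∀ M, IsKMonopoly G k M → M = univ) : monopolyNumber G k = Fintype.card V := by
  have : {n : ℕ | ∃ M : Finset V, IsKMonopoly G k M ∧ M.card = n} = {Fintype.card V} := by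
    ext n
    constructor
    · rintro ⟨M, hM, rfl⟩
      rw [h M hM, card_univ, Set.mem_singleton_iff]
    · rintro rfl
      exact ⟨univ, hU, card_univ⟩
  rw [monopolyNumber, this, csInf_singleton]

end Monopoly

section Wheel

variable {m : ℕ}

lemma wheelGraph_adj_none_some (i : Fin m) : (wheelGraph m).Adj none (some i) := by
  simp [wheelGraph]

lemma wheelGraph_adj_some_some {i j : Fin m} :
    (wheelGraph m).Adj (some i) (some j) ↔ (SimpleGraph.cycleGraph m).Adj i j := by
  simp only [wheelGraph, SimpleGraph.fromRel_adj, ne_eq, Option.some.injEq, reduceCtorEq,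
    false_or, exists_and_left, exists_eq_left', (SimpleGraph.cycleGraph m).adj_comm j i, or_self]
  exact and_iff_right_of_imp SimpleGraph.Adj.ne

lemma wheelGraph_degree_none : (wheelGraph m).degree none = m := by
  rw [(SimpleGraph.degree_eq_card_sub_one _ _).2]
  · simp
  · rintro (_ | i) h
    · exact absurd rfl h
    · exact wheelGraph_adj_none_some i

lemma wheelGraph_neighborFinset_some (i : Fin m) :
    (wheelGraph m).neighborFinset (some i) =
      insert none (((SimpleGraph.cycleGraph m).neighborFinset i).map .some) := by
  ext (_ | j)
  · simp [(wheelGraph m).adj_comm, wheelGraph_adj_none_some]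
  · simp [wheelGraph_adj_some_some]

lemma wheelGraph_degree_some (i : Fin (m + 3)) : (wheelGraph (m + 3)).degree (some i) = 3 := by
  rw [← SimpleGraph.card_neighborFinset_eq_degree, wheelGraph_neighborFinset_some,
    card_insert_of_notMem (by simp), card_map, SimpleGraph.card_neighborFinset_eq_degree,
    SimpleGraph.cycleGraph_degree_three_le]

lemma wheelGraph_exists_adj_rim (w : Option (Fin (m + 2))) :
    ∃ i, (wheelGraph (m + 2)).Adj (some i) w := by
  cases w with
  | none => exact ⟨0, (wheelGraph_adj_none_some 0).symm⟩
  | some j => exact ⟨j + 1, wheelGraph_adj_some_some.2 (by simp [SimpleGraph.cycleGraph_adj])⟩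

end Wheel

theorem stmt13 (n : ℕ) (hn : 4 ≤ n) :
    monopolyNumber (wheelGraph (n - 1)) 1 = n := by
  obtain ⟨m, rfl⟩ : ∃ m, n = m + 4 := ⟨n - 4, by omega⟩
  have hdeg : ∀ v, 2 ≤ (wheelGraph (m + 3)).degree v := by
    rintro (_ | i)
    · rw [wheelGraph_degree_none]; omega
    · rw [wheelGraph_degree_some]; omega
  have hrim : ∀ w, ∃ v, (wheelGraph (m + 3)).Adj v w ∧ (wheelGraph (m + 3)).degree v ≤ 3 :=
    fun w =>
      let ⟨i, hi⟩ := wheelGraph_exists_adj_rim (m := m + 1) w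
      ⟨some i, hi, (wheelGraph_degree_some i).le⟩
  calc monopolyNumber (wheelGraph (m + 4 - 1)) 1 = Fintype.card (Option (Fin (m + 3))) :=
        monopolyNumber_eq_card (isKMonopoly_one_univ _ hdeg) fun M hM => hM.eq_univ hrim
    _ = m + 4 := by simp
end

section
/- Let G be a graph whose vertex set admits a partition {X, Y} into two open 0-monopolies. Then for every vertex v of G, δ_X(v) = δ_Y(v), the degree of every vertex is even, and the number of edges of the subgraph induced by X equals the number of edges of the subgraph induced by Y. -/
open Finset

namespace SimpleGraph

variable {V : Type*} [Fintype V] [DecidableEq V] (G : SimpleGraph V) [DecidableRel G.Adj]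

theorem degIn_eq_card_bipartiteAbove (S : Finset V) (v : V) :
    degIn G S v = #(S.bipartiteAbove G.Adj v) := by
  rw [degIn, bipartiteAbove]
  congr 1
  ext w
  simp [and_comm]

theorem degIn_add_degIn_compl (S : Finset V) (v : V) :
    degIn G S v + degIn G Sᶜ v = G.degree v := by
  rw [degIn, degIn, ← card_union_of_disjoint (disjoint_compl_right.mono inter_subset_right
    inter_subset_right), ← inter_union_distrib_left, union_compl, inter_univ,
    card_neighborFinset_eq_degree]

theorem sum_degIn_comm (S T : Finset V) :
    ∑ v ∈ S, degIn G T v = ∑ v ∈ T, degIn G S v := by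
  simp only [degIn_eq_card_bipartiteAbove]
  rw [sum_card_bipartiteAbove_eq_sum_card_bipartiteBelow]
  simp only [bipartiteBelow, bipartiteAbove, G.adj_comm]

theorem degree_induce_eq_degIn (S : Finset V) (v : (S : Set V)) :
    (G.induce (S : Set V)).degree v = degIn G S v := by
  have h := G.map_neighborFinset_induce (s := (S : Set V)) v
  rw [Finset.toFinset_coe] at h
  rw [degIn, ← h, card_map, card_neighborFinset_eq_degree]
  -- the two sides carry different `Fintype` instances on the neighbour set
  congr!

theorem two_mul_card_edgeFinset_induce (S : Finset V) :
    2 * #(G.induce (S : Set V)).edgeFinset = ∑ v ∈ S, degIn G S v := by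
  rw [← sum_degrees_eq_twice_card_edges]
  simp only [degree_induce_eq_degIn]
  exact sum_finset_coe (degIn G S) S

/-- `2 e(X) = ∑_X δ_X = ∑_X δ_Y` and `2 e(Y) = ∑_Y δ_Y = ∑_Y δ_X`, and both right-hand sides
count the edges between `X` and `Y`. -/
theorem card_edgeFinset_induce_eq_of_degIn_eq {X Y : Finset V}
    (h : ∀ v, degIn G X v = degIn G Y v) :
    #(G.induce (X : Set V)).edgeFinset = #(G.induce (Y : Set V)).edgeFinset := by
  have : 2 * #(G.induce (X : Set V)).edgeFinset = 2 * #(G.induce (Y : Set V)).edgeFinset := by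
    simp only [two_mul_card_edgeFinset_induce]
    calc ∑ v ∈ X, degIn G X v = ∑ v ∈ X, degIn G Y v := sum_congr rfl fun v _ => h v
      _ = ∑ v ∈ Y, degIn G X v := G.sum_degIn_comm X Y
      _ = ∑ v ∈ Y, degIn G Y v := sum_congr rfl fun v _ => h v
  omega

end SimpleGraph

open SimpleGraph in
theorem stmt18 {V : Type*} [Fintype V] [DecidableEq V] (G : SimpleGraph V) [DecidableRel G.Adj]
    (X Y : Finset V) (hdisj : Disjoint X Y) (hcover : X ∪ Y = Finset.univ)
    (hX : X.Nonempty ∧ ∀ v : V, (degIn G X v : ℤ) ≥ (degIn G Xᶜ v : ℤ))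
    (hY : Y.Nonempty ∧ ∀ v : V, (degIn G Y v : ℤ) ≥ (degIn G Yᶜ v : ℤ)) :
    (∀ v : V, degIn G X v = degIn G Y v) ∧ (∀ v : V, Even (G.degree v)) ∧
      (G.induce (X : Set V)).edgeFinset.card = (G.induce (Y : Set V)).edgeFinset.card := by
  have hY_eq : Y = Xᶜ := (IsCompl.compl_eq ⟨hdisj, codisjoint_iff.mpr hcover⟩).symm
  subst hY_eq
  have hbalanced : ∀ v, degIn G X v = degIn G Xᶜ v := fun v => by
    have := hY.2 v
    rw [compl_compl] at this
    exact_mod_cast le_antisymm this (hX.2 v)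
  refine ⟨hbalanced, fun v => ?_, G.card_edgeFinset_induce_eq_of_degIn_eq hbalanced⟩
  rw [← degIn_add_degIn_compl G X v, ← hbalanced v]
  exact ⟨_, rfl⟩
end
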